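/- Let Γ be a finite connected tetravalent graph and let G ≤ Aut(Γ) be transitive on the vertex set and on the edge set of Γ but not transitive on the set of 2-arcs of Γ (the triples (u, v, w) of pairwise distinct vertices with v adjacent to both u and w). Then for every vertex v of Γ the stabilizer G_v of v in G is a 2-group. -/

import Mathlib

open Equiv MulAction

namespace HAT

variable {V : Type*}

/-- The automorphism group of a simple graph, as a subgroup of the permutation group
of the vertex set. -/
def aut (Γ : SimpleGraph V) : Subgroup (Equiv.Perm V) where
  carrier := {g | ∀ u v : V, Γ.Adj (g u) (g v) ↔ Γ.Adj u v}
  one_mem' := by intro u v; simp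
  mul_mem' := by
    intro a b ha hb u v
    simpa [Equiv.Perm.mul_apply] using (ha (b u) (b v)).trans (hb u v)
  inv_mem' := by
    intro g hg u v
    simpa using (hg (g⁻¹ u) (g⁻¹ v)).symm

/-- The valency (degree) of a vertex: the number of neighbours. -/
noncomputable def deg (Γ : SimpleGraph V) (v : V) : ℕ := (Γ.neighborSet v).ncard

/-- `G` is transitive on the vertices. -/
def VertexTrans (G : Subgroup (Equiv.Perm V)) : Prop := ∀ u v : V, ∃ g ∈ G, g u = v

/-- `G` is transitive on the edges. -/
def EdgeTrans (Γ : SimpleGraph V) (G : Subgroup (Equiv.Perm V)) : Prop :=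
  ∀ ⦃u v x y : V⦄, Γ.Adj u v → Γ.Adj x y →
    ∃ g ∈ G, (g u = x ∧ g v = y) ∨ (g u = y ∧ g v = x)

/-- `G` is transitive on the arcs (ordered pairs of adjacent vertices). -/
def ArcTrans (Γ : SimpleGraph V) (G : Subgroup (Equiv.Perm V)) : Prop :=
  ∀ ⦃u v x y : V⦄, Γ.Adj u v → Γ.Adj x y → ∃ g ∈ G, g u = x ∧ g v = y

/-- `Γ` is `G`-half-arc-transitive: `G` is vertex- and edge- but not arc-transitive. -/
def IsHAT (Γ : SimpleGraph V) (G : Subgroup (Equiv.Perm V)) : Prop :=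
  VertexTrans G ∧ EdgeTrans Γ G ∧ ¬ ArcTrans Γ G

/-- `G` is transitive on the `2`-arcs of `Γ`: the triples `(u, v, w)` of pairwise
distinct vertices with `v` adjacent to both `u` and `w`. -/
def TwoArcTrans (Γ : SimpleGraph V) (G : Subgroup (Equiv.Perm V)) : Prop :=
  ∀ ⦃u v w u' v' w' : V⦄, u ≠ w → Γ.Adj u v → Γ.Adj v w →
    u' ≠ w' → Γ.Adj u' v' → Γ.Adj v' w' →
    ∃ g ∈ G, g u = u' ∧ g v = v' ∧ g w = w'

theorem _root_.Equiv.Perm.inv_apply_self {α : Type*} (f : Equiv.Perm α) (x : α) :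
    f⁻¹ (f x) = x := f.symm_apply_apply x

theorem _root_.Equiv.Perm.apply_inv_self {α : Type*} (f : Equiv.Perm α) (x : α) :
    f (f⁻¹ x) = x := f.apply_symm_apply x

section Aux

variable {W : Type} [Fintype W]

private lemma adj_map {Γ : SimpleGraph W} {G : Subgroup (Equiv.Perm W)}
    (hGA : G ≤ aut Γ) {g : Equiv.Perm W} (hg : g ∈ G) {a b : W}
    (h : Γ.Adj a b) : Γ.Adj (g a) (g b) :=
  (hGA hg a b).mpr h

/-- The key local lemma: an element of odd order fixing a vertex fixes all of its
neighbours. -/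
private lemma nbr_fix (Γ : SimpleGraph W) (G : Subgroup (Equiv.Perm W))
    (hGA : G ≤ aut Γ) (htetra : ∀ u : W, deg Γ u = 4)
    (hVT : VertexTrans G) (hET : EdgeTrans Γ G) (hn2AT : ¬ TwoArcTrans Γ G)
    {π : Equiv.Perm W} (hπG : π ∈ G) (hodd : Odd (orderOf π))
    {u : W} (hu : π u = u) {w : W} (hw : Γ.Adj u w) : π w = w := by
  classical
  by_contra hne
  -- powers of π fix u
  have hpowu : ∀ k : ℕ, (π ^ k) u = u := by
    intro k
    induction k with
    | zero => simp
    | succ n ih => rw [pow_succ, Equiv.Perm.mul_apply, hu, ih]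
  have hpowG : ∀ k : ℕ, π ^ k ∈ G := fun k => pow_mem hπG k
  have hadjpow : ∀ (k : ℕ) (a : W), Γ.Adj u a → Γ.Adj u ((π ^ k) a) := by
    intro k a ha
    have := adj_map hGA (hpowG k) ha
    rwa [hpowu k] at this
  set n := orderOf π with hn
  have hnpos : 0 < n := hodd.pos
  have hper : Function.IsPeriodicPt π n w := by
    show (⇑π)^[n] w = w
    rw [Equiv.Perm.iterate_eq_pow, pow_orderOf_eq_one]
    rfl
  obtain ⟨d, hdd⟩ : ∃ d, Function.minimalPeriod (⇑π) w = d := ⟨_, rfl⟩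
  have hd_dvd : d ∣ n := hdd ▸ hper.minimalPeriod_dvd
  have hdodd : Odd d := by
    obtain ⟨c, hc⟩ := hd_dvd
    rw [hc] at hodd
    exact (Nat.odd_mul.mp hodd).1
  have hdpos : 0 < d := hdd ▸
    Function.minimalPeriod_pos_of_mem_periodicPts ⟨n, hnpos, hper⟩
  have hdne1 : d ≠ 1 := by
    intro h1
    have := Function.isPeriodicPt_minimalPeriod π w
    rw [hdd, h1] at this
    exact hne (by simpa [Function.IsPeriodicPt, Function.IsFixedPt] using this)
  -- pigeonhole: d ≤ 4
  have hcard : (Γ.neighborFinset u).card = 4 := by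
    have h4 := htetra u
    rw [deg, Set.ncard_eq_toFinset_card'] at h4
    rw [SimpleGraph.neighborFinset_def]
    convert h4 using 2
  have hdle : d ≤ 4 := by
    obtain ⟨i, hi, j, hj, hij, heq⟩ :=
      Finset.exists_ne_map_eq_of_card_lt_of_maps_to
        (s := Finset.range 5) (t := Γ.neighborFinset u)
        (by rw [Finset.card_range, hcard]; norm_num)
        (fun k _ => (SimpleGraph.mem_neighborFinset _ _ _).mpr (hadjpow k w hw))
    rw [Finset.mem_range] at hi hj
    rcases Nat.lt_or_ge i j with hlt | hge
    · have key : (π ^ (j - i)) w = w := by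
        have h1 : (π ^ i) ((π ^ (j - i)) w) = (π ^ i) w := by
          rw [← Equiv.Perm.mul_apply, ← pow_add, Nat.add_sub_cancel' hlt.le]
          exact heq.symm
        exact (π ^ i).injective h1
      have hdvd2 : d ∣ (j - i) := hdd ▸
        Function.IsPeriodicPt.minimalPeriod_dvd
          (show (⇑π)^[j - i] w = w by rw [Equiv.Perm.iterate_eq_pow]; exact key)
      calc d ≤ j - i := Nat.le_of_dvd (by omega) hdvd2
        _ ≤ 4 := by omega
    · have hlt : j < i := by omega
      have key : (π ^ (i - j)) w = w := by
        have h1 : (π ^ j) ((π ^ (i - j)) w) = (π ^ j) w := by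
          rw [← Equiv.Perm.mul_apply, ← pow_add, Nat.add_sub_cancel' hlt.le]
          exact heq
        exact (π ^ j).injective h1
      have hdvd2 : d ∣ (i - j) := hdd ▸
        Function.IsPeriodicPt.minimalPeriod_dvd
          (show (⇑π)^[i - j] w = w by rw [Equiv.Perm.iterate_eq_pow]; exact key)
      calc d ≤ i - j := Nat.le_of_dvd (by omega) hdvd2
        _ ≤ 4 := by omega
  have hd3 : d = 3 := by
    have h2 := Nat.odd_iff.mp hdodd
    omega
  have hw3 : (π ^ 3) w = w := by
    have := Function.isPeriodicPt_minimalPeriod π w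
    rw [hdd, hd3] at this
    rw [Function.IsPeriodicPt, Function.IsFixedPt, Equiv.Perm.iterate_eq_pow] at this
    exact this
  -- distinctness
  have hne1 : w ≠ π w := fun h => hne h.symm
  have hp2 : (π ^ 2) w = π (π w) := by rw [pow_two]; rfl
  have hp3 : (π ^ 3) w = π ((π ^ 2) w) := by rw [pow_succ']; rfl
  have hne2 : w ≠ (π ^ 2) w := by
    intro h
    have hdvd2 : d ∣ 2 := hdd ▸
      Function.IsPeriodicPt.minimalPeriod_dvd
        (show (⇑π)^[2] w = w by rw [Equiv.Perm.iterate_eq_pow]; exact h.symm)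
    have hle2 : d ≤ 2 := Nat.le_of_dvd (by norm_num) hdvd2
    omega
  have hne3 : π w ≠ (π ^ 2) w := by
    intro h
    rw [hp2] at h
    exact hne1 (π.injective h)
  have hπp2w : π ((π ^ 2) w) = w := by rw [← hp3]; exact hw3
  -- the fourth neighbour x
  set s := Γ.neighborFinset u with hs
  set t : Finset W := {w, π w, (π ^ 2) w} with ht
  have hts : t ⊆ s := by
    intro a ha
    rw [ht, Finset.mem_insert, Finset.mem_insert, Finset.mem_singleton] at ha
    rcases ha with h | h | h
    · subst h; exact (SimpleGraph.mem_neighborFinset _ _ _).mpr hw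
    · subst h
      exact (SimpleGraph.mem_neighborFinset _ _ _).mpr
        (by simpa using hadjpow 1 w hw)
    · subst h; exact (SimpleGraph.mem_neighborFinset _ _ _).mpr (hadjpow 2 w hw)
  have htcard : t.card = 3 := by
    rw [ht, Finset.card_insert_of_notMem (by simp [hne1, hne2]),
      Finset.card_insert_of_notMem (by simp [hne3]), Finset.card_singleton]
  have hsd : (s \ t).card = 1 := by
    rw [Finset.card_sdiff_of_subset hts, hcard, htcard]
  obtain ⟨x, hx⟩ := Finset.card_eq_one.mp hsd
  have hxst : x ∈ s \ t := by rw [hx]; exact Finset.mem_singleton_self x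
  have hxs : x ∈ s := (Finset.mem_sdiff.mp hxst).1
  have hxt : x ∉ t := (Finset.mem_sdiff.mp hxst).2
  have hadjux : Γ.Adj u x := (SimpleGraph.mem_neighborFinset _ _ _).mp hxs
  have hxw : x ≠ w := fun h => hxt (by rw [ht, h]; simp)
  have hxpw : x ≠ π w := fun h => hxt (by rw [ht, h]; simp)
  have hxp2w : x ≠ (π ^ 2) w := fun h => hxt (by rw [ht, h]; simp)
  have hπx : π x = x := by
    have h1 : π x ∈ s := by
      have := adj_map hGA hπG hadjux
      rw [hu] at this
      exact (SimpleGraph.mem_neighborFinset _ _ _).mpr this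
    have h2 : π x ∉ t := by
      intro hmem
      rw [ht, Finset.mem_insert, Finset.mem_insert, Finset.mem_singleton] at hmem
      rcases hmem with h | h | h
      · exact hxp2w (π.injective (by rw [h, hπp2w]))
      · exact hxw (π.injective h)
      · exact hxpw (π.injective (by rw [h, hp2]))
    have hmm : π x ∈ s \ t := Finset.mem_sdiff.mpr ⟨h1, h2⟩
    rw [hx, Finset.mem_singleton] at hmm
    exact hmm
  have hπ2x : (π ^ 2) x = x := by rw [pow_two, Equiv.Perm.mul_apply, hπx, hπx]
  have hsfull : ∀ a : W, Γ.Adj u a →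
      a = x ∨ a = w ∨ a = π w ∨ a = (π ^ 2) w := by
    intro a ha
    by_cases hat : a ∈ t
    · rw [ht, Finset.mem_insert, Finset.mem_insert, Finset.mem_singleton] at hat
      tauto
    · left
      have hmm : a ∈ s \ t :=
        Finset.mem_sdiff.mpr ⟨(SimpleGraph.mem_neighborFinset _ _ _).mpr ha, hat⟩
      rw [hx, Finset.mem_singleton] at hmm
      exact hmm
  -- main case split
  by_cases hfix : ∀ k : Equiv.Perm W, k ∈ G → k u = u → k x = x
  · -- G_u fixes x : construct a surjective non-injective map, contradiction
    obtain ⟨h, hhG, hhc⟩ := hET hadjux hw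
    rcases hhc with ⟨h1, h2⟩ | ⟨hhu, hhx⟩
    · exact hxw ((hfix h hhG h1).symm.trans h2)
    have hwd : ∀ k k' : Equiv.Perm W, k ∈ G → k' ∈ G → k u = k' u →
        k x = k' x := by
      intro k k' hk hk' he
      have hm : (k'⁻¹ * k) ∈ G := mul_mem (inv_mem hk') hk
      have hmu : (k'⁻¹ * k) u = u := by
        rw [Equiv.Perm.mul_apply, he, Equiv.Perm.inv_apply_self]
      have h3 := hfix _ hm hmu
      rw [Equiv.Perm.mul_apply] at h3
      have h4 := congrArg k' h3
      rwa [Equiv.Perm.apply_inv_self] at h4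
    have hVTu : ∀ z : W, ∃ g, g ∈ G ∧ g u = z := by
      intro z
      obtain ⟨g, hg, hgz⟩ := hVT u z
      exact ⟨g, hg, hgz⟩
    set f : W → W := fun z => (hVTu z).choose x with hf
    have hkey : ∀ k : Equiv.Perm W, k ∈ G → f (k u) = k x := by
      intro k hk
      exact hwd _ k (hVTu (k u)).choose_spec.1 hk (hVTu (k u)).choose_spec.2
    have hsurj : Function.Surjective f := by
      intro z
      obtain ⟨k, hk, hkz⟩ := hVT x z
      exact ⟨k u, by rw [hkey k hk, hkz]⟩
    have hinj : Function.Injective f := Finite.injective_iff_surjective.mpr hsurj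
    have hfw : f w = u := by
      have h5 := hkey h hhG
      rwa [hhu, hhx] at h5
    have hfπw : f (π w) = u := by
      have h5 := hkey (π * h) (mul_mem hπG hhG)
      rwa [Equiv.Perm.mul_apply, Equiv.Perm.mul_apply, hhu, hhx, hu] at h5
    exact hne1 (hinj (hfw.trans hfπw.symm))
  · -- G_u is transitive on the neighbours of u: build 2-arc-transitivity
    push_neg at hfix
    obtain ⟨k, hkG, hku, hkx⟩ := hfix
    have hkadj : Γ.Adj u (k x) := by
      have := adj_map hGA hkG hadjux
      rwa [hku] at this
    have e1 : π (π w) = (π ^ 2) w := hp2.symm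
    have e3 : (π ^ 2) (π w) = w := by
      rw [pow_two, Equiv.Perm.mul_apply, e1, hπp2w]
    have e4 : (π ^ 2) ((π ^ 2) w) = π w := by
      nth_rewrite 1 [pow_two]
      rw [Equiv.Perm.mul_apply, hπp2w]
    have hm : ∃ m : Equiv.Perm W, m ∈ G ∧ m u = u ∧ m x = w := by
      rcases hsfull (k x) hkadj with h | h | h | h
      · exact absurd h hkx
      · exact ⟨k, hkG, hku, h⟩
      · refine ⟨π ^ 2 * k, mul_mem (hpowG 2) hkG, ?_, ?_⟩
        · rw [Equiv.Perm.mul_apply, hku, hpowu 2]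
        · rw [Equiv.Perm.mul_apply, h, e3]
      · refine ⟨π * k, mul_mem hπG hkG, ?_, ?_⟩
        · rw [Equiv.Perm.mul_apply, hku, hu]
        · rw [Equiv.Perm.mul_apply, h, hπp2w]
    obtain ⟨m, hmG, hmu, hmx⟩ := hm
    have mapsx : ∀ a : W, Γ.Adj u a → ∃ g, g ∈ G ∧ g u = u ∧ g x = a := by
      intro a ha
      rcases hsfull a ha with h | h | h | h
      · exact ⟨1, one_mem G, rfl, by rw [h]; rfl⟩
      · exact ⟨m, hmG, hmu, by rw [h, hmx]⟩
      · refine ⟨π * m, mul_mem hπG hmG, ?_, ?_⟩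
        · rw [Equiv.Perm.mul_apply, hmu, hu]
        · rw [Equiv.Perm.mul_apply, hmx, h]
      · refine ⟨π ^ 2 * m, mul_mem (hpowG 2) hmG, ?_, ?_⟩
        · rw [Equiv.Perm.mul_apply, hmu, hpowu 2]
        · rw [Equiv.Perm.mul_apply, hmx, h]
    have loc_u : ∀ a b : W, Γ.Adj u a → Γ.Adj u b →
        ∃ g, g ∈ G ∧ g u = u ∧ g a = b := by
      intro a b ha hb
      obtain ⟨ga, hgaG, hgau, hgax⟩ := mapsx a ha
      obtain ⟨gb, hgbG, hgbu, hgbx⟩ := mapsx b hb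
      have hgau' : ga⁻¹ u = u := Equiv.Perm.inv_eq_iff_eq.mpr hgau.symm
      have hgaa' : ga⁻¹ a = x := Equiv.Perm.inv_eq_iff_eq.mpr hgax.symm
      refine ⟨gb * ga⁻¹, mul_mem hgbG (inv_mem hgaG), ?_, ?_⟩
      · rw [Equiv.Perm.mul_apply, hgau', hgbu]
      · rw [Equiv.Perm.mul_apply, hgaa', hgbx]
    -- two-point local transitivity at u, anchored at x
    have two_loc_u : ∀ b b' : W, Γ.Adj u b → Γ.Adj u b' → b ≠ x → b' ≠ x →
        ∃ g, g ∈ G ∧ g u = u ∧ g x = x ∧ g b = b' := by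
      intro b b' hb hb' hbx hb'x
      rcases hsfull b hb with h | rfl | rfl | rfl
      · exact absurd h hbx
      · rcases hsfull b' hb' with h' | rfl | rfl | rfl
        · exact absurd h' hb'x
        · exact ⟨1, one_mem G, rfl, rfl, rfl⟩
        · exact ⟨π, hπG, hu, hπx, rfl⟩
        · exact ⟨π ^ 2, hpowG 2, hpowu 2, hπ2x, rfl⟩
      · rcases hsfull b' hb' with h' | rfl | rfl | rfl
        · exact absurd h' hb'x
        · exact ⟨π ^ 2, hpowG 2, hpowu 2, hπ2x, e3⟩
        · exact ⟨1, one_mem G, rfl, rfl, rfl⟩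
        · exact ⟨π, hπG, hu, hπx, e1⟩
      · rcases hsfull b' hb' with h' | rfl | rfl | rfl
        · exact absurd h' hb'x
        · exact ⟨π, hπG, hu, hπx, hπp2w⟩
        · exact ⟨π ^ 2, hpowG 2, hpowu 2, hπ2x, e4⟩
        · exact ⟨1, one_mem G, rfl, rfl, rfl⟩
    have two_loc_any : ∀ z a b b' : W, Γ.Adj z a → Γ.Adj z b → Γ.Adj z b' →
        b ≠ a → b' ≠ a → ∃ g, g ∈ G ∧ g z = z ∧ g a = a ∧ g b = b' := by
      intro z a b b' ha hb hb' hba hb'a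
      obtain ⟨tt, httG, httz⟩ := hVT z u
      have hta : Γ.Adj u (tt a) := by
        have := adj_map hGA httG ha; rwa [httz] at this
      obtain ⟨m1, hm1G, hm1u, hm1a⟩ := loc_u (tt a) x hta hadjux
      set τ := m1 * tt with hτ
      have hτG : τ ∈ G := mul_mem hm1G httG
      have hτz : τ z = u := by rw [hτ, Equiv.Perm.mul_apply, httz, hm1u]
      have hτa : τ a = x := by rw [hτ, Equiv.Perm.mul_apply, hm1a]
      have hτb : Γ.Adj u (τ b) := by
        have := adj_map hGA hτG hb; rwa [hτz] at this
      have hτb' : Γ.Adj u (τ b') := by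
        have := adj_map hGA hτG hb'; rwa [hτz] at this
      have hh1 : τ b ≠ x := fun hh => hba (τ.injective (hh.trans hτa.symm))
      have hh2 : τ b' ≠ x := fun hh => hb'a (τ.injective (hh.trans hτa.symm))
      obtain ⟨g, hgG, hgu, hgx, hgb⟩ := two_loc_u (τ b) (τ b') hτb hτb' hh1 hh2
      refine ⟨τ⁻¹ * (g * τ), mul_mem (inv_mem hτG) (mul_mem hgG hτG), ?_, ?_, ?_⟩
      · rw [Equiv.Perm.mul_apply, Equiv.Perm.mul_apply, hτz, hgu, ← hτz,
          Equiv.Perm.inv_apply_self]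
      · rw [Equiv.Perm.mul_apply, Equiv.Perm.mul_apply, hτa, hgx, ← hτa,
          Equiv.Perm.inv_apply_self]
      · rw [Equiv.Perm.mul_apply, Equiv.Perm.mul_apply, hgb,
          Equiv.Perm.inv_apply_self]
    have loc_any : ∀ z a b : W, Γ.Adj z a → Γ.Adj z b →
        ∃ g, g ∈ G ∧ g z = z ∧ g a = b := by
      intro z a b ha hb
      obtain ⟨tt, httG, httz⟩ := hVT z u
      have hta : Γ.Adj u (tt a) := by
        have := adj_map hGA httG ha; rwa [httz] at this
      have htb : Γ.Adj u (tt b) := by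
        have := adj_map hGA httG hb; rwa [httz] at this
      obtain ⟨g, hgG, hgu, hgab⟩ := loc_u (tt a) (tt b) hta htb
      refine ⟨tt⁻¹ * (g * tt), mul_mem (inv_mem httG) (mul_mem hgG httG), ?_, ?_⟩
      · rw [Equiv.Perm.mul_apply, Equiv.Perm.mul_apply, httz, hgu, ← httz,
          Equiv.Perm.inv_apply_self]
      · rw [Equiv.Perm.mul_apply, Equiv.Perm.mul_apply, hgab,
          Equiv.Perm.inv_apply_self]
    have swap : ∀ r s' : W, Γ.Adj r s' → ∃ ρ, ρ ∈ G ∧ ρ s' = r ∧ ρ r = s' := by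
      intro r s' hrs
      obtain ⟨tt, httG, hts⟩ := hVT s' r
      have htr : Γ.Adj r (tt r) := by
        have := adj_map hGA httG hrs.symm; rwa [hts] at this
      obtain ⟨g, hgG, hgr, hgtr⟩ := loc_any r (tt r) s' htr hrs
      refine ⟨g * tt, mul_mem hgG httG, ?_, ?_⟩
      · rw [Equiv.Perm.mul_apply, hts, hgr]
      · rw [Equiv.Perm.mul_apply, hgtr]
    have arcT : ∀ ⦃p q r s' : W⦄, Γ.Adj p q → Γ.Adj r s' →
        ∃ g, g ∈ G ∧ g p = r ∧ g q = s' := by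
      intro p q r s' hpq hrs
      obtain ⟨g, hgG, hc⟩ := hET hpq hrs
      rcases hc with ⟨h1, h2⟩ | ⟨h1, h2⟩
      · exact ⟨g, hgG, h1, h2⟩
      · obtain ⟨ρ, hρG, hρs, hρr⟩ := swap r s' hrs
        exact ⟨ρ * g, mul_mem hρG hgG,
          by rw [Equiv.Perm.mul_apply, h1, hρs],
          by rw [Equiv.Perm.mul_apply, h2, hρr]⟩
    -- contradiction with hn2AT
    apply hn2AT
    intro a c b a' c' b' hab hac hcb ha'b' ha'c' hc'b'
    obtain ⟨k2, hk2G, hk2a, hk2c⟩ := arcT hac ha'c'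
    have hkb : Γ.Adj c' (k2 b) := by
      have := adj_map hGA hk2G hcb; rwa [hk2c] at this
    have hkba : k2 b ≠ a' := by
      intro hh
      exact hab (k2.injective (hh.trans hk2a.symm)).symm
    obtain ⟨σ, hσG, hσc, hσa, hσb⟩ :=
      two_loc_any c' a' (k2 b) b' ha'c'.symm hkb hc'b' hkba (Ne.symm ha'b')
    exact ⟨σ * k2, mul_mem hσG hk2G,
      by rw [Equiv.Perm.mul_apply, hk2a, hσa],
      by rw [Equiv.Perm.mul_apply, hk2c, hσc],
      by rw [Equiv.Perm.mul_apply, hσb]⟩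

private lemma odd_fix_all (Γ : SimpleGraph W) (G : Subgroup (Equiv.Perm W))
    (hGA : G ≤ aut Γ) (hconn : Γ.Connected) (htetra : ∀ u : W, deg Γ u = 4)
    (hVT : VertexTrans G) (hET : EdgeTrans Γ G) (hn2AT : ¬ TwoArcTrans Γ G)
    {π : Equiv.Perm W} (hπG : π ∈ G) (hodd : Odd (orderOf π))
    {v : W} (hv : π v = v) : π = 1 := by
  have key : ∀ (y z : W), Γ.Walk y z → π y = y → π z = z := by
    intro y z p
    induction p with
    | nil => exact id
    | cons h _ ih =>
      intro hy
      exact ih (nbr_fix Γ G hGA htetra hVT hET hn2AT hπG hodd hy h)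
  apply Equiv.ext
  intro z
  exact (hconn.preconnected v z).elim (fun p => key v z p hv)

end Aux

/-- **Folklore.** If `Γ` is a finite connected tetravalent graph and `G ≤ Aut(Γ)` is
vertex- and edge-transitive but not transitive on `2`-arcs, then every vertex
stabilizer `G_v` is a `2`-group. -/
theorem stab_two_group {V : Type} [Fintype V] (Γ : SimpleGraph V)
    (G : Subgroup (Equiv.Perm V)) (hGA : G ≤ aut Γ)
    (hconn : Γ.Connected) (htetra : ∀ u : V, deg Γ u = 4)
    (hVT : VertexTrans G) (hET : EdgeTrans Γ G)
    (hn2AT : ¬ TwoArcTrans Γ G) (v : V) :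
    IsPGroup 2 ↥(MulAction.stabilizer ↥G v) := by
  intro h
  have hN0 : orderOf h ≠ 0 := (orderOf_pos h).ne'
  refine ⟨(orderOf h).factorization 2, ?_⟩
  have hdvd : 2 ^ (orderOf h).factorization 2 ∣ orderOf h := Nat.ordProj_dvd _ 2
  obtain ⟨h', hh'⟩ : ∃ h'', h ^ 2 ^ (orderOf h).factorization 2 = h'' := ⟨_, rfl⟩
  rw [hh']
  have hodd' : Odd (orderOf h') := by
    rw [← hh', orderOf_pow, Nat.gcd_eq_right hdvd, Nat.odd_iff]
    have h2 : ¬ (2 ∣ orderOf h / 2 ^ (orderOf h).factorization 2) :=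
      Nat.not_dvd_ordCompl Nat.prime_two hN0
    omega
  have hπG : ((h' : ↥G) : Equiv.Perm V) ∈ G := (h' : ↥G).2
  have hordπ : Odd (orderOf ((h' : ↥G) : Equiv.Perm V)) := by
    rwa [Subgroup.orderOf_coe, Subgroup.orderOf_coe]
  have hπv : ((h' : ↥G) : Equiv.Perm V) v = v := by
    have hst : ((h' : ↥G)) • v = v := h'.2
    rwa [Subgroup.smul_def, Equiv.Perm.smul_def] at hst
  have hone : ((h' : ↥G) : Equiv.Perm V) = 1 :=
    odd_fix_all Γ G hGA hconn htetra hVT hET hn2AT hπG hordπ hπv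
  exact Subtype.ext (Subtype.ext hone)

end HAT
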